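/- arXiv:2011.11292 — 7 statements merged into one kernel-verified Lean document; each statement's English description precedes it below -/
import Mathlib

section
/- If the integer interval [1, m] (with m ≥ 1) can be partitioned into r pairwise disjoint subsets, each of which is strongly sum-free (contains no elements a, b, c, not necessarily distinct, with a + b = c), then the integer interval [1, 4m + 2] can be partitioned into r + 1 pairwise disjoint subsets, each of which is weakly sum-free (contains no three pairwise distinct elements a, b, c with a + b = c). -/
/-- A set of naturals is strongly sum-free if it contains no `a, b, c`
(not necessarily distinct) with `a + b = c`. -/
def StronglySumFree (S : Set ℕ) : Prop :=
  ∀ a ∈ S, ∀ b ∈ S, a + b ∉ S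

/-- A set of naturals is weakly sum-free if it contains no pairwise distinct
`a, b, c` with `a + b = c`. -/
def WeaklySumFree (S : Set ℕ) : Prop :=
  ∀ a ∈ S, ∀ b ∈ S, ∀ c ∈ S, a ≠ b → a ≠ c → b ≠ c → a + b ≠ c

/-- `P : Fin r → Set ℕ` is a partition of the integer interval `[1, n]`
into `r` pairwise disjoint subsets. -/
def IsPartitionOf (n : ℕ) {r : ℕ} (P : Fin r → Set ℕ) : Prop :=
  (⋃ i, P i) = Set.Icc 1 n ∧ ∀ i j, i ≠ j → Disjoint (P i) (P j)

/-- If `[1, m]` (with `m ≥ 1`) is partitioned into `r` strongly sum-free subsets,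
then `[1, 4m + 2]` can be partitioned into `r + 1` weakly sum-free subsets. -/
theorem stmt_0 (m r : ℕ) (hm : 1 ≤ m) (P : Fin r → Set ℕ)
    (hP : IsPartitionOf m P) (hSF : ∀ i, StronglySumFree (P i)) :
    ∃ Q : Fin (r + 1) → Set ℕ, IsPartitionOf (4 * m + 2) Q ∧ ∀ i, WeaklySumFree (Q i) := by
  obtain ⟨hcov, hdis⟩ := hP
  have hbd : ∀ i, ∀ x ∈ P i, 1 ≤ x ∧ x ≤ m := by
    intro i x hx
    have hxm : x ∈ Set.Icc 1 m := by
      rw [← hcov]; exact Set.mem_iUnion.mpr ⟨i, hx⟩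
    simpa using hxm
  refine ⟨fun i => if h : (i : ℕ) < r then
      {n | ∃ x ∈ P ⟨(i : ℕ), h⟩, n + 1 = 4 * x ∨ n = 4 * x ∨ n = 4 * x + 1}
    else {n | n = 1 ∨ (n % 4 = 2 ∧ n ≤ 4 * m + 2)}, ⟨?_, ?_⟩, ?_⟩
  · -- union is Icc 1 (4m+2)
    ext n
    simp only [Set.mem_iUnion, Set.mem_Icc]
    constructor
    · rintro ⟨i, hi⟩
      by_cases h : (i : ℕ) < r
      · rw [dif_pos h] at hi
        obtain ⟨x, hx, hcase⟩ := hi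
        have hb := hbd _ x hx
        rcases hcase with h' | h' | h' <;> omega
      · rw [dif_neg h] at hi
        rcases hi with h' | h' <;> omega
    · rintro ⟨h1, h2⟩
      by_cases hT : n = 1 ∨ n % 4 = 2
      · refine ⟨Fin.last r, ?_⟩
        rw [dif_neg (by simp)]
        rcases hT with h | h
        · exact Or.inl h
        · exact Or.inr ⟨h, h2⟩
      · push_neg at hT
        have hx1 : 1 ≤ (n + 1) / 4 ∧ (n + 1) / 4 ≤ m ∧
            (n + 1 = 4 * ((n + 1) / 4) ∨ n = 4 * ((n + 1) / 4) ∨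
              n = 4 * ((n + 1) / 4) + 1) := by omega
        have hxm : (n + 1) / 4 ∈ Set.Icc 1 m := Set.mem_Icc.mpr ⟨hx1.1, hx1.2.1⟩
        rw [← hcov] at hxm
        obtain ⟨j, hj⟩ := Set.mem_iUnion.mp hxm
        have hjlt : (j : ℕ) < r + 1 := lt_trans j.isLt (Nat.lt_succ_self r)
        refine ⟨⟨(j : ℕ), hjlt⟩, ?_⟩
        have hcond : ((⟨(j : ℕ), hjlt⟩ : Fin (r + 1)) : ℕ) < r := j.isLt
        rw [dif_pos hcond]
        exact ⟨(n + 1) / 4, hj, hx1.2.2⟩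
  · -- pairwise disjoint
    intro i j hij
    rw [Set.disjoint_left]
    intro n hni hnj
    dsimp only at hni hnj
    by_cases hi : (i : ℕ) < r <;> by_cases hj : (j : ℕ) < r
    · rw [dif_pos hi] at hni
      rw [dif_pos hj] at hnj
      obtain ⟨x, hx, hcx⟩ := hni
      obtain ⟨y, hy, hcy⟩ := hnj
      have hbx := hbd _ x hx
      have hby := hbd _ y hy
      have hxy : x = y := by
        rcases hcx with h | h | h <;> rcases hcy with h' | h' | h' <;> omega
      subst hxy
      have hne : (⟨(i : ℕ), hi⟩ : Fin r) ≠ ⟨(j : ℕ), hj⟩ := by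
        intro h
        apply hij
        have h2 : (i : ℕ) = (j : ℕ) := by simpa using congrArg Fin.val h
        exact Fin.ext h2
      exact Set.disjoint_left.mp (hdis _ _ hne) hx hy
    · rw [dif_pos hi] at hni
      rw [dif_neg hj] at hnj
      obtain ⟨x, hx, hcx⟩ := hni
      have hbx := hbd _ x hx
      rcases hcx with h | h | h <;> rcases hnj with h' | h' <;> omega
    · rw [dif_neg hi] at hni
      rw [dif_pos hj] at hnj
      obtain ⟨x, hx, hcx⟩ := hnj
      have hbx := hbd _ x hx
      rcases hcx with h | h | h <;> rcases hni with h' | h' <;> omega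
    · have hival := i.isLt
      have hjval := j.isLt
      exact absurd (Fin.ext (by omega : (i : ℕ) = (j : ℕ))) hij
  · -- each part is weakly sum-free
    intro i
    by_cases hi : (i : ℕ) < r
    · intro a ha b hb c hc hab hac hbc habc
      dsimp only at ha hb hc
      rw [dif_pos hi] at ha hb hc
      obtain ⟨x, hx, hca⟩ := ha
      obtain ⟨y, hy, hcb⟩ := hb
      obtain ⟨z, hz, hcc⟩ := hc
      have hxyz : x + y = z := by
        rcases hca with h | h | h <;> rcases hcb with h' | h' | h' <;>
          rcases hcc with h'' | h'' | h'' <;> omega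
      exact hSF _ x hx y hy (by rw [hxyz]; exact hz)
    · intro a ha b hb c hc hab hac hbc habc
      dsimp only at ha hb hc
      rw [dif_neg hi] at ha hb hc
      rcases ha with h | h <;> rcases hb with h' | h' <;> rcases hc with h'' | h'' <;> omega
end

section
/- If the integer interval [1, m] (with m ≥ 1) can be partitioned into r pairwise disjoint subsets, each of which is strongly sum-free (contains no elements a, b, c, not necessarily distinct, with a + b = c), then the integer interval [1, 13m + 8] can be partitioned into r + 2 pairwise disjoint subsets, each of which is weakly sum-free (contains no three pairwise distinct elements a, b, c with a + b = c). -/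
/-- First of the two fresh classes. -/
def wsfA (r : ℕ) : Fin (r + 2) := ⟨r, by omega⟩

/-- Second of the two fresh classes. -/
def wsfB (r : ℕ) : Fin (r + 2) := ⟨r + 1, by omega⟩

open Classical in
/-- Index of the part of `P` containing `x` (junk value if none). -/
noncomputable def wsfPidx {r : ℕ} (P : Fin r → Set ℕ) (x : ℕ) : Fin (r + 2) :=
  if h : ∃ i, x ∈ P i then (h.choose.castAdd 2) else wsfA r

open Classical in
/-- The class of `n` in the new partition of `[1, 13m+8]`. -/
noncomputable def wsfCls {r : ℕ} (P : Fin r → Set ℕ) (n : ℕ) : Fin (r + 2) :=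
  if n ≤ 8 then (if n = 1 ∨ n = 2 ∨ n = 4 ∨ n = 8 then wsfA r else wsfB r)
  else if 5 ≤ n % 13 ∧ n % 13 ≤ 8 then
    (if n % 13 = 5 ∨ n % 13 = 8 then wsfA r else wsfB r)
  else wsfPidx P ((n + 4) / 13)

lemma wsfAB (r : ℕ) : wsfA r ≠ wsfB r := by
  simp [wsfA, wsfB, Fin.ext_iff]

lemma wsfOA {r : ℕ} (j : Fin r) :
    (j.castAdd 2 : Fin (r + 2)) ≠ wsfA r ∧ (j.castAdd 2 : Fin (r + 2)) ≠ wsfB r := by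
  have hj := j.isLt
  constructor <;>
    · intro h
      have := congrArg Fin.val h
      simp [wsfA, wsfB] at this
      omega

set_option maxHeartbeats 1000000 in
/-- If `[1, m]` (with `m ≥ 1`) is partitioned into `r` strongly sum-free subsets,
then `[1, 13m + 8]` can be partitioned into `r + 2` weakly sum-free subsets. -/
theorem stmt_1 (m r : ℕ) (hm : 1 ≤ m) (P : Fin r → Set ℕ)
    (hP : IsPartitionOf m P) (hSF : ∀ i, StronglySumFree (P i)) :
    ∃ Q : Fin (r + 2) → Set ℕ, IsPartitionOf (13 * m + 8) Q ∧ ∀ i, WeaklySumFree (Q i) := by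
  classical
  obtain ⟨hU, hD⟩ := hP
  have hex : ∀ x : ℕ, 1 ≤ x → x ≤ m → ∃ i, x ∈ P i := by
    intro x h1 h2
    have hx : x ∈ ⋃ i, P i := by rw [hU]; exact ⟨h1, h2⟩
    simpa using hx
  have pidx_spec : ∀ x : ℕ, 1 ≤ x → x ≤ m →
      ∃ j : Fin r, wsfPidx P x = j.castAdd 2 ∧ x ∈ P j := by
    intro x h1 h2
    have h := hex x h1 h2
    exact ⟨h.choose, by rw [wsfPidx, dif_pos h], h.choose_spec⟩
  -- Shape analysis for elements of [1, 13m+8].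
  have shape : ∀ n, 1 ≤ n → n ≤ 13 * m + 8 →
      (∃ y t, n = 13 * y + t ∧
        ((wsfCls P n = wsfA r ∧
            ((y = 0 ∧ (t = 1 ∨ t = 2 ∨ t = 4 ∨ t = 8)) ∨ (1 ≤ y ∧ (t = 5 ∨ t = 8)))) ∨
         (wsfCls P n = wsfB r ∧
            ((y = 0 ∧ (t = 3 ∨ t = 5 ∨ t = 6 ∨ t = 7)) ∨ (1 ≤ y ∧ (t = 6 ∨ t = 7)))))) ∨
      (∃ x e, ∃ j : Fin r, 1 ≤ x ∧ x ≤ m ∧ n + 4 = 13 * x + e ∧ e ≤ 8 ∧ x ∈ P j ∧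
        wsfCls P n = j.castAdd 2) := by
    intro n h1 h2
    by_cases h8 : n ≤ 8
    · left
      refine ⟨0, n, by omega, ?_⟩
      rw [wsfCls, if_pos h8]
      by_cases h : n = 1 ∨ n = 2 ∨ n = 4 ∨ n = 8
      · exact Or.inl ⟨if_pos h, by omega⟩
      · exact Or.inr ⟨if_neg h, by omega⟩
    · by_cases hbig : 5 ≤ n % 13 ∧ n % 13 ≤ 8
      · left
        refine ⟨n / 13, n % 13, by omega, ?_⟩
        rw [wsfCls, if_neg h8, if_pos hbig]
        by_cases h : n % 13 = 5 ∨ n % 13 = 8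
        · exact Or.inl ⟨if_pos h, by omega⟩
        · exact Or.inr ⟨if_neg h, by omega⟩
      · right
        have hx1 : 1 ≤ (n + 4) / 13 := by omega
        have hxm : (n + 4) / 13 ≤ m := by omega
        obtain ⟨j, hj1, hj2⟩ := pidx_spec _ hx1 hxm
        refine ⟨(n + 4) / 13, (n + 4) % 13, j, hx1, hxm, by omega, by omega, hj2, ?_⟩
        rw [wsfCls, if_neg h8, if_neg hbig]
        exact hj1
  refine ⟨fun i => {n | n ∈ Set.Icc 1 (13 * m + 8) ∧ wsfCls P n = i}, ⟨?_, ?_⟩, ?_⟩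
  · ext n
    simp only [Set.mem_iUnion, Set.mem_setOf_eq]
    exact ⟨fun ⟨i, h, _⟩ => h, fun h => ⟨wsfCls P n, h, rfl⟩⟩
  · intro i j hij
    rw [Set.disjoint_left]
    rintro n ⟨_, h1⟩ ⟨_, h2⟩
    exact hij (h1.symm.trans h2)
  · intro i a ha b hb c hc hab hac hbc heq
    simp only [Set.mem_setOf_eq, Set.mem_Icc] at ha hb hc
    obtain ⟨⟨ha1, ha2⟩, hca⟩ := ha
    obtain ⟨⟨hb1, hb2⟩, hcb⟩ := hb
    obtain ⟨⟨hc1, hc2⟩, hcc⟩ := hc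
    rcases shape a ha1 ha2 with ⟨ya, ta, hadec, hacl⟩ |
        ⟨xa, ea, ja, hxa1, hxa2, hadec, hea, hpa, hacl⟩ <;>
      rcases shape b hb1 hb2 with ⟨yb, tb, hbdec, hbcl⟩ |
        ⟨xb, eb, jb, hxb1, hxb2, hbdec, heb, hpb, hbcl⟩ <;>
      rcases shape c hc1 hc2 with ⟨yc, tc, hcdec, hccl⟩ |
        ⟨xc, ec, jc, hxc1, hxc2, hcdec, hec, hpc, hccl⟩
    · -- all three "new"
      rcases hacl with ⟨hea', pa⟩ | ⟨hea', pa⟩ <;>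
        rcases hbcl with ⟨heb', pb⟩ | ⟨heb', pb⟩ <;>
          rcases hccl with ⟨hec', pc⟩ | ⟨hec', pc⟩ <;>
            [skip; skip; skip; skip; skip; skip; skip; skip] <;>
            first
              | exact wsfAB r ((hea'.symm.trans hca).trans (hcb.symm.trans heb'))
              | exact wsfAB r ((heb'.symm.trans hcb).trans (hca.symm.trans hea'))
              | exact wsfAB r ((hea'.symm.trans hca).trans (hcc.symm.trans hec'))
              | exact wsfAB r ((hec'.symm.trans hcc).trans (hca.symm.trans hea'))
              | (clear hca hcb hcc hex pidx_spec shape hSF hD hU; omega)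
    · -- a,b new, c old : class conflict
      rcases hacl with ⟨hea', _⟩ | ⟨hea', _⟩
      · exact (wsfOA jc).1 ((hccl.symm.trans hcc).trans (hca.symm.trans hea'))
      · exact (wsfOA jc).2 ((hccl.symm.trans hcc).trans (hca.symm.trans hea'))
    · rcases hacl with ⟨hea', _⟩ | ⟨hea', _⟩
      · exact (wsfOA jb).1 ((hbcl.symm.trans hcb).trans (hca.symm.trans hea'))
      · exact (wsfOA jb).2 ((hbcl.symm.trans hcb).trans (hca.symm.trans hea'))
    · rcases hacl with ⟨hea', _⟩ | ⟨hea', _⟩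
      · exact (wsfOA jb).1 ((hbcl.symm.trans hcb).trans (hca.symm.trans hea'))
      · exact (wsfOA jb).2 ((hbcl.symm.trans hcb).trans (hca.symm.trans hea'))
    · rcases hbcl with ⟨heb', _⟩ | ⟨heb', _⟩
      · exact (wsfOA ja).1 ((hacl.symm.trans hca).trans (hcb.symm.trans heb'))
      · exact (wsfOA ja).2 ((hacl.symm.trans hca).trans (hcb.symm.trans heb'))
    · rcases hbcl with ⟨heb', _⟩ | ⟨heb', _⟩
      · exact (wsfOA ja).1 ((hacl.symm.trans hca).trans (hcb.symm.trans heb'))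
      · exact (wsfOA ja).2 ((hacl.symm.trans hca).trans (hcb.symm.trans heb'))
    · rcases hccl with ⟨hec', _⟩ | ⟨hec', _⟩
      · exact (wsfOA ja).1 ((hacl.symm.trans hca).trans (hcc.symm.trans hec'))
      · exact (wsfOA ja).2 ((hacl.symm.trans hca).trans (hcc.symm.trans hec'))
    · -- all three old: strong sum-freeness argument
      have e1 : ja.castAdd 2 = jb.castAdd 2 := (hacl.symm.trans hca).trans (hcb.symm.trans hbcl)
      have e2 : ja.castAdd 2 = jc.castAdd 2 := (hacl.symm.trans hca).trans (hcc.symm.trans hccl)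
      have ej1 : ja = jb := by
        have := congrArg Fin.val e1
        simpa [Fin.ext_iff] using this
      have ej2 : ja = jc := by
        have := congrArg Fin.val e2
        simpa [Fin.ext_iff] using this
      have hxc : xc = xa + xb := by omega
      exact hSF ja xa hpa xb (ej1 ▸ hpb) (by rw [← hxc]; exact ej2 ▸ hpc)
end

section
/- Let m ≥ 1 and let S be a subset of the integer interval [1, m] that is strongly sum-free (contains no elements a, b, c, not necessarily distinct, with a + b = c). Then the set ⋃_{i ∈ S} {4i − 1, 4i, 4i + 1} is strongly sum-free. -/
/-- If `S ⊆ [1, m]` (with `m ≥ 1`) is strongly sum-free, then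
`⋃ i ∈ S, {4i - 1, 4i, 4i + 1}` is strongly sum-free. -/
theorem stmt_6 (m : ℕ) (hm : 1 ≤ m) (S : Set ℕ) (hS : S ⊆ Set.Icc 1 m)
    (hSF : StronglySumFree S) :
    StronglySumFree (⋃ i ∈ S, ({4 * i - 1, 4 * i, 4 * i + 1} : Set ℕ)) := by
  intro a ha b hb hab
  simp only [Set.mem_iUnion, Set.mem_insert_iff, Set.mem_singleton_iff] at ha hb hab
  obtain ⟨i, hi, hai⟩ := ha
  obtain ⟨j, hj, hbj⟩ := hb
  obtain ⟨k, hk, hck⟩ := hab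
  have h1 : 1 ≤ i := (hS hi).1
  have h2 : 1 ≤ j := (hS hj).1
  have h3 : 1 ≤ k := (hS hk).1
  have hij : k = i + j := by omega
  exact hSF i hi j hj (hij ▸ hk)
end

section
/- Let m ≥ 1 and let S be a subset of the integer interval [1, m] that is strongly sum-free (contains no elements a, b, c, not necessarily distinct, with a + b = c). Then the set ⋃_{i ∈ S} {13i − 4, 13i − 3, ..., 13i + 4} (the union of the integer intervals [13i − 4, 13i + 4] for i ∈ S) is strongly sum-free. -/
/-- If `S ⊆ [1, m]` (with `m ≥ 1`) is strongly sum-free, then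
`⋃ i ∈ S, [13i - 4, 13i + 4]` is strongly sum-free. -/
theorem stmt_8 (m : ℕ) (hm : 1 ≤ m) (S : Set ℕ) (hS : S ⊆ Set.Icc 1 m)
    (hSF : StronglySumFree S) :
    StronglySumFree (⋃ i ∈ S, Set.Icc (13 * i - 4) (13 * i + 4)) := by
  intro a ha b hb hab
  simp only [Set.mem_iUnion, Set.mem_Icc] at ha hb hab
  obtain ⟨i, hi, hai⟩ := ha
  obtain ⟨j, hj, hbj⟩ := hb
  obtain ⟨k, hk, hck⟩ := hab
  have hi1 : 1 ≤ i := (hS hi).1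
  have hj1 : 1 ≤ j := (hS hj).1
  have hk1 : 1 ≤ k := (hS hk).1
  have : k = i + j := by omega
  exact hSF i hi j hj (this ▸ hk)
end

section
/- For every m ≥ 1, the set {1, 2, 4} ∪ {13k + 8 : 0 ≤ k ≤ m} = {1, 2, 4, 8, 21, 34, ..., 13m + 8} is weakly sum-free: it contains no three pairwise distinct elements a, b, c with a + b = c. -/
/-- For every `m ≥ 1`, the set `{1, 2, 4} ∪ {13k + 8 : 0 ≤ k ≤ m}` is weakly sum-free. -/
theorem stmt_9 (m : ℕ) (hm : 1 ≤ m) :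
    WeaklySumFree (({1, 2, 4} : Set ℕ) ∪ {x | ∃ k, k ≤ m ∧ x = 13 * k + 8}) := by
  intro a ha b hb c hc hab hac hbc habc
  simp only [Set.mem_union, Set.mem_insert_iff, Set.mem_singleton_iff,
    Set.mem_setOf_eq] at ha hb hc
  rcases ha with (rfl | rfl | rfl) | ⟨ka, hka, rfl⟩ <;>
    rcases hb with (rfl | rfl | rfl) | ⟨kb, hkb, rfl⟩ <;>
    rcases hc with (rfl | rfl | rfl) | ⟨kc, hkc, rfl⟩ <;>
    omega
end

section
/- The integer interval [1, 642] can be partitioned into 6 pairwise disjoint subsets, each of which is weakly sum-free (contains no three pairwise distinct elements a, b, c with a + b = c); equivalently, WS(6) ≥ 642. -/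
set_option maxRecDepth 100000
set_option exponentiation.threshold 2000


def M0 : Nat := 3539879038417093717803407744496152829337042651418102082758933964960411753715292968140951328792594779821847600832274062033552959802806670901130939438523744256
def M1 : Nat := 8998735375950461184416224664052306642404528073532645359172692747600330972444434594307245407692625154112144863982775981411811369332897007332142239154981484007771380445494961430515818840498498
def M2 : Nat := 13673861779347246799313344010187349612449369195557723097429413177520044963632505271415178404551410846766310579298308151420705224931201984407942117929099995150532162159218608820149170671234056192
def M3 : Nat := 282649054912192821925206689081762425075082287061752032861904847528941317736651277750083096890431196436344417002770398999061958015590099846459745304738973180156902101515144604800552143880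
def M4 : Nat := 4453332774055563463611271749350189291402296158632624331528413240164364406883298581211165951518364085142484649825707347426430377120558459768438659458508771791640827034803103824270691144228
def M5 : Nat := 22816659690272535520875327074272490244562458818561684289665182138112315520421702114669855796571885352553022419882104534464694847185538706600339814658843911590178092254682208599703938538131243152

def chkOne (m : Nat) : Bool :=
  (List.range 643).all (fun a => !(m.testBit a) || (m &&& ((m >>> (a+1)) <<< (2*a+1)) == 0))

def Mv : Fin 6 → Nat := fun i => [M0, M1, M2, M3, M4, M5].get (i.cast (by rfl))

lemma key_of_chk {m : Nat} (hm : m < 2^643) (h : chkOne m = true) :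
    ∀ a b : ℕ, m.testBit a = true → m.testBit b = true → a < b → m.testBit (a+b) = false := by
  intro a b ha hb hab
  have ha643 : a < 643 := by
    by_contra hle
    rw [Nat.testBit_lt_two_pow (lt_of_lt_of_le hm (Nat.pow_le_pow_right (by norm_num) (by omega)))] at ha
    exact Bool.false_ne_true ha
  have h2 := List.all_eq_true.mp h a (List.mem_range.mpr ha643)
  rw [ha] at h2
  simp only [Bool.not_true, Bool.false_or, beq_iff_eq] at h2
  by_contra hc
  rw [Bool.not_eq_false] at hc
  have : (m &&& ((m >>> (a+1)) <<< (2*a+1))).testBit (a+b) = true := by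
    rw [Nat.testBit_and, Nat.testBit_shiftLeft, Nat.testBit_shiftRight, hc]
    have h1 : 2*a+1 ≤ a + b := by omega
    have h2 : a + 1 + (a + b - (2*a+1)) = b := by omega
    rw [h2, hb]
    simp [h1]
  rw [h2, Nat.zero_testBit] at this
  exact Bool.false_ne_true this

lemma weak_of_chk {m : Nat} (hm : m < 2^643) (h : chkOne m = true) :
    WeaklySumFree {n | m.testBit n = true} := by
  intro a ha b hb c hc hab _ _ heq
  simp only [Set.mem_setOf_eq] at ha hb hc
  rcases Nat.lt_or_ge a b with h1 | h1
  · have := key_of_chk hm h a b ha hb h1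
    rw [← heq, this] at hc
    exact Bool.false_ne_true hc
  · have h1' : b < a := by omega
    have := key_of_chk hm h b a hb ha h1'
    rw [Nat.add_comm] at this
    rw [← heq, this] at hc
    exact Bool.false_ne_true hc

lemma disj_of_and_zero {x y : Nat} (h : x &&& y = 0) :
    Disjoint {n | x.testBit n = true} {n | y.testBit n = true} := by
  rw [Set.disjoint_left]
  intro n hx hy
  simp only [Set.mem_setOf_eq] at hx hy
  have : (x &&& y).testBit n = true := by rw [Nat.testBit_and, hx, hy]; rfl
  rw [h, Nat.zero_testBit] at this
  exact Bool.false_ne_true this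

lemma hlor : ((((M0 ||| M1) ||| M2) ||| M3) ||| M4) ||| M5 = 2^643 - 2 := by decide

lemma testT (n : ℕ) : (2^643 - 2 : Nat).testBit n = true ↔ 1 ≤ n ∧ n ≤ 642 := by
  have hT : (2^643 - 2 : Nat) = (2^642 - 1) <<< 1 := by
    rw [Nat.shiftLeft_eq, pow_one]
    have : (2:ℕ)^643 = 2^642 * 2 := by ring
    omega
  rw [hT, Nat.testBit_shiftLeft, Nat.testBit_two_pow_sub_one]
  simp only [ge_iff_le, Bool.and_eq_true, decide_eq_true_eq]
  omega

/-- `[1, 642]` can be partitioned into 6 pairwise disjoint weakly sum-free subsets,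
i.e. `WS(6) ≥ 642`. -/
theorem stmt_11 :
    ∃ Q : Fin 6 → Set ℕ, IsPartitionOf 642 Q ∧ ∀ i, WeaklySumFree (Q i) := by
  refine ⟨fun i => {n | (Mv i).testBit n = true}, ⟨?_, ?_⟩, ?_⟩
  · ext n
    simp only [Set.mem_iUnion, Set.mem_setOf_eq, Set.mem_Icc]
    rw [← testT n, ← hlor]
    simp only [Nat.testBit_lor, Bool.or_eq_true]
    constructor
    · rintro ⟨i, hi⟩
      fin_cases i
      · exact Or.inl (Or.inl (Or.inl (Or.inl (Or.inl hi))))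
      · exact Or.inl (Or.inl (Or.inl (Or.inl (Or.inr hi))))
      · exact Or.inl (Or.inl (Or.inl (Or.inr hi)))
      · exact Or.inl (Or.inl (Or.inr hi))
      · exact Or.inl (Or.inr hi)
      · exact Or.inr hi
    · intro h
      rcases h with ((((h|h)|h)|h)|h)|h
      · exact ⟨0, h⟩
      · exact ⟨1, h⟩
      · exact ⟨2, h⟩
      · exact ⟨3, h⟩
      · exact ⟨4, h⟩
      · exact ⟨5, h⟩
  · intro i j hij
    fin_cases i <;> fin_cases j <;>
      first
        | exact absurd rfl hij
        | (exact disj_of_and_zero (by decide))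
        | (exact (disj_of_and_zero (by decide)).symm)
  · intro i
    fin_cases i <;>
      exact weak_of_chk (by decide) (by decide)
end

section
/- For every r ≥ 1, WS(r + 1) ≥ 4·S(r) + 2, where S(r) is the largest n admitting a partition of [1, n] into r strongly sum-free subsets and WS(r) is the largest n admitting a partition of [1, n] into r weakly sum-free subsets. -/
/-- The Schur number `S(r)`: the largest `n` such that `[1, n]` can be partitioned
into `r` pairwise disjoint strongly sum-free subsets. -/
noncomputable def schurNumber (r : ℕ) : ℕ :=
  sSup {n | ∃ P : Fin r → Set ℕ, IsPartitionOf n P ∧ ∀ i, StronglySumFree (P i)}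

/-- The weak Schur number `WS(r)`: the largest `n` such that `[1, n]` can be
partitioned into `r` pairwise disjoint weakly sum-free subsets. -/
noncomputable def weakSchurNumber (r : ℕ) : ℕ :=
  sSup {n | ∃ P : Fin r → Set ℕ, IsPartitionOf n P ∧ ∀ i, WeaklySumFree (P i)}

/-- Extraction lemma (an unfolding of the Ramsey argument): from any sufficiently
large finite set of naturals one can extract a strictly increasing sequence
`v 0 < v 1 < ...` together with colors `col i` such that the "difference color"
`χ (v j - v i)` equals `col i` for all `i < j`. -/
lemma ws17_extract (R : ℕ) (hR : 0 < R) (χ : ℕ → Fin R) :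
    ∀ (k : ℕ) (T : Finset ℕ), (R + 1) ^ k ≤ T.card →
    ∃ (v : Fin (k + 1) → ℕ) (col : Fin (k + 1) → Fin R),
      StrictMono v ∧ (∀ j, v j ∈ T) ∧
      ∀ i j : Fin (k + 1), i < j → χ (v j - v i) = col i := by
  intro k
  induction k with
  | zero =>
      intro T hT
      have hne : T.Nonempty := Finset.card_pos.mp (by simpa using hT)
      obtain ⟨t, ht⟩ := hne
      refine ⟨fun _ => t, fun _ => ⟨0, hR⟩, ?_, fun _ => ht, ?_⟩
      · intro i j hij
        exfalso
        have hi := i.isLt; have hj := j.isLt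
        rw [Fin.lt_def] at hij; omega
      · intro i j hij
        exfalso
        have hi := i.isLt; have hj := j.isLt
        rw [Fin.lt_def] at hij; omega
  | succ k ih =>
      intro T hT
      have hTpos : 0 < T.card := lt_of_lt_of_le (by positivity) hT
      have hne : T.Nonempty := Finset.card_pos.mp hTpos
      set m := T.min' hne with hm
      have hmT : m ∈ T := T.min'_mem hne
      set T' := T.erase m with hT'
      have hcardT' : T'.card = T.card - 1 := Finset.card_erase_of_mem hmT
      have hfib : ∃ c : Fin R,
          (R + 1) ^ k ≤ (T'.filter (fun x => χ (x - m) = c)).card := by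
        by_contra hno
        push_neg at hno
        have hsum : T'.card = ∑ c : Fin R, (T'.filter (fun x => χ (x - m) = c)).card :=
          Finset.card_eq_sum_card_fiberwise (fun x _ => Finset.mem_univ _)
        have hle : T'.card + R ≤ R * (R + 1) ^ k := by
          calc T'.card + R
              = (∑ c : Fin R, (T'.filter (fun x => χ (x - m) = c)).card) + R := by
                rw [hsum]
            _ = ∑ c : Fin R, ((T'.filter (fun x => χ (x - m) = c)).card + 1) := by
                rw [Finset.sum_add_distrib, Finset.sum_const, Finset.card_univ,
                  Fintype.card_fin, smul_eq_mul, mul_one]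
            _ ≤ ∑ _c : Fin R, (R + 1) ^ k :=
                Finset.sum_le_sum (fun c _ => hno c)
            _ = R * (R + 1) ^ k := by
                rw [Finset.sum_const, Finset.card_univ, Fintype.card_fin, smul_eq_mul]
        have hpow : (R + 1) ^ (k + 1) = R * (R + 1) ^ k + (R + 1) ^ k := by ring
        have hx1 : 1 ≤ (R + 1) ^ k := Nat.one_le_pow _ _ (by omega)
        set X := (R + 1) ^ k with hX
        set Y := R * X with hY
        set Z := (R + 1) ^ (k + 1) with hZ
        omega
      obtain ⟨c, hc⟩ := hfib
      obtain ⟨v, col, hmono, hmem, hcol⟩ := ih (T'.filter (fun x => χ (x - m) = c)) hc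
      have hmemT' : ∀ j, v j ∈ T' := fun j => Finset.mem_of_mem_filter _ (hmem j)
      have hmlt : ∀ j, m < v j := by
        intro j
        have h2 := Finset.mem_erase.mp (hmemT' j)
        exact lt_of_le_of_ne (T.min'_le _ h2.2) (Ne.symm h2.1)
      refine ⟨Fin.cases m v, Fin.cases c col, ?_, ?_, ?_⟩
      · intro i j hij
        induction j using Fin.cases with
        | zero => exact absurd hij (Fin.not_lt_zero i)
        | succ j' =>
          induction i using Fin.cases with
          | zero =>
            simp only [Fin.cases_zero, Fin.cases_succ]
            exact hmlt j'
          | succ i' =>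
            simp only [Fin.cases_succ]
            exact hmono (by rwa [Fin.succ_lt_succ_iff] at hij)
      · intro j
        induction j using Fin.cases with
        | zero => simpa using hmT
        | succ j' =>
          simp only [Fin.cases_succ]
          exact Finset.mem_of_mem_erase (hmemT' j')
      · intro i j hij
        induction j using Fin.cases with
        | zero => exact absurd hij (Fin.not_lt_zero i)
        | succ j' =>
          induction i using Fin.cases with
          | zero =>
            simp only [Fin.cases_zero, Fin.cases_succ]
            exact (Finset.mem_filter.mp (hmem j')).2
          | succ i' =>
            simp only [Fin.cases_succ]
            exact hcol i' j' (by rwa [Fin.succ_lt_succ_iff] at hij)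

/-- From a finite set of size at least 3, extract three increasing elements. -/
lemma ws17_three {α : Type*} [LinearOrder α] (s : Finset α) (h : 3 ≤ s.card) :
    ∃ a b c, a ∈ s ∧ b ∈ s ∧ c ∈ s ∧ a < b ∧ b < c := by
  have hne : s.Nonempty := Finset.card_pos.mp (by omega)
  have haS := s.min'_mem hne
  set a := s.min' hne with ha
  set s' := s.erase a with hs'
  have hcard' : 2 ≤ s'.card := by
    rw [hs', Finset.card_erase_of_mem haS]; omega
  have hne' : s'.Nonempty := Finset.card_pos.mp (by omega)
  have hbS' := s'.min'_mem hne'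
  set b := s'.min' hne' with hb
  set s'' := s'.erase b with hs''
  have hcard'' : 1 ≤ s''.card := by
    rw [hs'', Finset.card_erase_of_mem hbS']; omega
  obtain ⟨c, hc⟩ := Finset.card_pos.mp (by omega : 0 < s''.card)
  have hcS' : c ∈ s' := Finset.mem_of_mem_erase hc
  have hbS : b ∈ s := Finset.mem_of_mem_erase hbS'
  have hcS : c ∈ s := Finset.mem_of_mem_erase hcS'
  refine ⟨a, b, c, haS, hbS, hcS, ?_, ?_⟩
  · exact lt_of_le_of_ne (s.min'_le b hbS) (Ne.symm (Finset.mem_erase.mp hbS').1)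
  · exact lt_of_le_of_ne (s'.min'_le c hcS') (Ne.symm (Finset.mem_erase.mp hc).1)

/-- Weak Schur numbers are finite: any partition of `[1, N]` into `R` weakly
sum-free classes forces `N + 1 ≤ (R+1)^(2R+2)`. -/
lemma ws17_bound (R N : ℕ) (hR : 0 < R) (P : Fin R → Set ℕ)
    (hP : IsPartitionOf N P) (hW : ∀ i, WeaklySumFree (P i)) :
    N + 1 ≤ (R + 1) ^ (2 * R + 2) := by
  by_contra hcon
  push_neg at hcon
  classical
  have hex : ∀ x, 1 ≤ x → x ≤ N → ∃ i, x ∈ P i := by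
    intro x h1 h2
    have hx : x ∈ ⋃ i, P i := by rw [hP.1]; exact Set.mem_Icc.mpr ⟨h1, h2⟩
    exact Set.mem_iUnion.mp hx
  set χ : ℕ → Fin R := fun x => if h : ∃ i, x ∈ P i then h.choose else ⟨0, hR⟩ with hχdef
  have hχ : ∀ x, 1 ≤ x → x ≤ N → x ∈ P (χ x) := by
    intro x h1 h2
    have h := hex x h1 h2
    show x ∈ P (if h' : ∃ i, x ∈ P i then h'.choose else ⟨0, hR⟩)
    rw [dif_pos h]
    exact h.choose_spec
  have hcard : (R + 1) ^ (2 * R + 1) ≤ (Finset.Icc 0 N).card := by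
    rw [Nat.card_Icc]
    have h1 : (R + 1) ^ (2 * R + 1) ≤ (R + 1) ^ (2 * R + 2) :=
      Nat.pow_le_pow_right (by omega) (by omega)
    omega
  obtain ⟨v, col, hmono, hmemT, hcol⟩ :=
    ws17_extract R hR χ (2 * R + 1) (Finset.Icc 0 N) hcard
  have hpig : ∃ y ∈ (Finset.univ : Finset (Fin R)),
      2 < ((Finset.univ : Finset (Fin (2 * R + 1))).filter
        (fun i => col (Fin.castSucc i) = y)).card := by
    apply Finset.exists_lt_card_fiber_of_mul_lt_card_of_maps_to
      (fun a _ => Finset.mem_univ _)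
    simp only [Finset.card_univ, Fintype.card_fin]
    omega
  obtain ⟨c0, -, hc0⟩ := hpig
  obtain ⟨i1, i2, i3, hi1, hi2, hi3, h12, h23⟩ := ws17_three _ hc0
  have hcol1 : col (Fin.castSucc i1) = c0 := (Finset.mem_filter.mp hi1).2
  have hcol2 : col (Fin.castSucc i2) = c0 := (Finset.mem_filter.mp hi2).2
  set w := v (Fin.castSucc i1) with hw
  set x := v (Fin.castSucc i2) with hx
  set y := v (Fin.castSucc i3) with hy
  set z := v (Fin.last (2 * R + 1)) with hz
  have hwx : w < x := hmono (Fin.castSucc_lt_castSucc_iff.mpr h12)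
  have hxy : x < y := hmono (Fin.castSucc_lt_castSucc_iff.mpr h23)
  have hyz : y < z := hmono (Fin.castSucc_lt_last i3)
  have hwN : w ≤ N := (Finset.mem_Icc.mp (hmemT _)).2
  have hxN : x ≤ N := (Finset.mem_Icc.mp (hmemT _)).2
  have hyN : y ≤ N := (Finset.mem_Icc.mp (hmemT _)).2
  have hzN : z ≤ N := (Finset.mem_Icc.mp (hmemT _)).2
  have e1 : χ (x - w) = c0 :=
    (hcol _ _ (Fin.castSucc_lt_castSucc_iff.mpr h12)).trans hcol1
  have e2 : χ (y - w) = c0 :=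
    (hcol _ _ (Fin.castSucc_lt_castSucc_iff.mpr (h12.trans h23))).trans hcol1
  have e3 : χ (z - w) = c0 :=
    (hcol _ _ (Fin.castSucc_lt_last i1)).trans hcol1
  have e4 : χ (y - x) = c0 :=
    (hcol _ _ (Fin.castSucc_lt_castSucc_iff.mpr h23)).trans hcol2
  have e5 : χ (z - x) = c0 :=
    (hcol _ _ (Fin.castSucc_lt_last i2)).trans hcol2
  have m1 : x - w ∈ P c0 := by
    have := hχ (x - w) (by omega) (by omega); rwa [e1] at this
  have m2 : y - x ∈ P c0 := by
    have := hχ (y - x) (by omega) (by omega); rwa [e4] at this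
  have m3 : y - w ∈ P c0 := by
    have := hχ (y - w) (by omega) (by omega); rwa [e2] at this
  have m4 : z - x ∈ P c0 := by
    have := hχ (z - x) (by omega) (by omega); rwa [e5] at this
  have m5 : z - w ∈ P c0 := by
    have := hχ (z - w) (by omega) (by omega); rwa [e3] at this
  by_cases hd : x - w = y - x
  · exact (hW c0 (x - w) m1 (z - x) m4 (z - w) m5
      (by omega) (by omega) (by omega)) (by omega)
  · exact (hW c0 (x - w) m1 (y - x) m2 (y - w) m3
      hd (by omega) (by omega)) (by omega)

/-- The key construction: from a strongly sum-free partition of `[1, n]` into `r`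
classes, build a weakly sum-free partition of `[1, 4n+2]` into `r+1` classes,
via `a ↦ {4a-1, 4a, 4a+1}` and the extra class `{1} ∪ {2, 6, 10, ...}`. -/
lemma ws17_construct (r : ℕ) (hr : 1 ≤ r) (n : ℕ)
    (h : ∃ P : Fin r → Set ℕ, IsPartitionOf n P ∧ ∀ i, StronglySumFree (P i)) :
    ∃ Q : Fin (r + 1) → Set ℕ,
      IsPartitionOf (4 * n + 2) Q ∧ ∀ i, WeaklySumFree (Q i) := by
  classical
  obtain ⟨P, hPart, hSSF⟩ := h
  have hex : ∀ a, 1 ≤ a → a ≤ n → ∃ i, a ∈ P i := by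
    intro a h1 h2
    have ha : a ∈ ⋃ i, P i := by rw [hPart.1]; exact Set.mem_Icc.mpr ⟨h1, h2⟩
    exact Set.mem_iUnion.mp ha
  set f : ℕ → Fin r := fun a => if h : ∃ i, a ∈ P i then h.choose else ⟨0, hr⟩ with hfdef
  have hf : ∀ a, 1 ≤ a → a ≤ n → a ∈ P (f a) := by
    intro a h1 h2
    have h := hex a h1 h2
    show a ∈ P (if h' : ∃ i, a ∈ P i then h'.choose else ⟨0, hr⟩)
    rw [dif_pos h]
    exact h.choose_spec
  set g : ℕ → Fin (r + 1) := fun x =>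
    if x = 1 ∨ x % 4 = 2 then Fin.last r else Fin.castSucc (f ((x + 1) / 4)) with hg
  refine ⟨fun i => {x | x ∈ Set.Icc 1 (4 * n + 2) ∧ g x = i}, ⟨?_, ?_⟩, ?_⟩
  · ext x
    simp only [Set.mem_iUnion, Set.mem_setOf_eq]
    constructor
    · rintro ⟨i, hx, -⟩; exact hx
    · intro hx; exact ⟨g x, hx, rfl⟩
  · intro i j hij
    rw [Set.disjoint_left]
    rintro x ⟨-, hxi⟩ ⟨-, hxj⟩
    exact hij (by rw [← hxi, hxj])
  · intro i a ha b hb c hc hab hac hbc heq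
    obtain ⟨haI, hag⟩ := ha
    obtain ⟨hbI, hbg⟩ := hb
    obtain ⟨hcI, hcg⟩ := hc
    obtain ⟨ha1, ha2⟩ := Set.mem_Icc.mp haI
    obtain ⟨hb1, hb2⟩ := Set.mem_Icc.mp hbI
    obtain ⟨hc1, hc2⟩ := Set.mem_Icc.mp hcI
    rw [hg] at hag hbg hcg
    simp only at hag hbg hcg
    by_cases hA : a = 1 ∨ a % 4 = 2
    · -- the extra class
      rw [if_pos hA] at hag
      have hB : b = 1 ∨ b % 4 = 2 := by
        by_contra hB
        rw [if_neg hB, ← hag] at hbg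
        exact absurd hbg (ne_of_lt (Fin.castSucc_lt_last _))
      have hC : c = 1 ∨ c % 4 = 2 := by
        by_contra hC
        rw [if_neg hC, ← hag] at hcg
        exact absurd hcg (ne_of_lt (Fin.castSucc_lt_last _))
      omega
    · -- a block class
      rw [if_neg hA] at hag
      have hB : ¬(b = 1 ∨ b % 4 = 2) := by
        intro hB
        rw [if_pos hB, ← hag] at hbg
        exact absurd hbg.symm (ne_of_lt (Fin.castSucc_lt_last _))
      have hC : ¬(c = 1 ∨ c % 4 = 2) := by
        intro hC
        rw [if_pos hC, ← hag] at hcg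
        exact absurd hcg.symm (ne_of_lt (Fin.castSucc_lt_last _))
      rw [if_neg hB] at hbg
      rw [if_neg hC] at hcg
      set A := (a + 1) / 4 with hA4
      set B := (b + 1) / 4 with hB4
      set C := (c + 1) / 4 with hC4
      have hfBA : f B = f A := Fin.castSucc_inj.mp (hbg.trans hag.symm)
      have hfCA : f C = f A := Fin.castSucc_inj.mp (hcg.trans hag.symm)
      have hAb : 4 * A - 1 ≤ a ∧ a ≤ 4 * A + 1 ∧ 1 ≤ A ∧ A ≤ n := by omega
      have hBb : 4 * B - 1 ≤ b ∧ b ≤ 4 * B + 1 ∧ 1 ≤ B ∧ B ≤ n := by omega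
      have hCb : 4 * C - 1 ≤ c ∧ c ≤ 4 * C + 1 ∧ 1 ≤ C ∧ C ≤ n := by omega
      have hABC : A + B = C := by omega
      have hmA : A ∈ P (f A) := hf A hAb.2.2.1 hAb.2.2.2
      have hmB : B ∈ P (f A) := hfBA ▸ hf B hBb.2.2.1 hBb.2.2.2
      have hmC : C ∈ P (f A) := hfCA ▸ hf C hCb.2.2.1 hCb.2.2.2
      rw [← hABC] at hmC
      exact hSSF (f A) A hmA B hmB hmC

/-- For every `r ≥ 1`, `WS(r + 1) ≥ 4 · S(r) + 2`. -/
theorem stmt_17 (r : ℕ) (hr : 1 ≤ r) :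
    4 * schurNumber r + 2 ≤ weakSchurNumber (r + 1) := by
  classical
  unfold schurNumber weakSchurNumber
  have hWbdd : BddAbove {n | ∃ P : Fin (r + 1) → Set ℕ,
      IsPartitionOf n P ∧ ∀ i, WeaklySumFree (P i)} := by
    refine ⟨(r + 1 + 1) ^ (2 * (r + 1) + 2), ?_⟩
    rintro N ⟨P, hP, hPw⟩
    have hb := ws17_bound (r + 1) N (by omega) P hP hPw
    exact le_trans (Nat.le_succ N) hb
  have hS0 : 0 ∈ {n | ∃ P : Fin r → Set ℕ,
      IsPartitionOf n P ∧ ∀ i, StronglySumFree (P i)} := by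
    refine ⟨fun _ => (∅ : Set ℕ), ⟨?_, ?_⟩, ?_⟩
    · rw [Set.Icc_eq_empty (by omega : ¬(1 : ℕ) ≤ 0)]
      exact Set.iUnion_empty
    · intro i j _
      simp
    · intro i a ha
      exact absurd ha (Set.notMem_empty a)
  have hSbdd : BddAbove {n | ∃ P : Fin r → Set ℕ,
      IsPartitionOf n P ∧ ∀ i, StronglySumFree (P i)} := by
    refine ⟨(r + 1 + 1) ^ (2 * (r + 1) + 2), ?_⟩
    intro nn hnn
    obtain ⟨Q, hQ, hQw⟩ := ws17_construct r hr nn hnn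
    have hb := ws17_bound (r + 1) (4 * nn + 2) (by omega) Q hQ hQw
    exact le_trans (by omega : nn ≤ 4 * nn + 2 + 1) hb
  have hmem := Nat.sSup_mem ⟨0, hS0⟩ hSbdd
  obtain ⟨Q, hQ, hQw⟩ := ws17_construct r hr _ hmem
  exact le_csSup hWbdd ⟨Q, hQ, hQw⟩
end
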